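/- arXiv:1705.02862 — 8 statements merged into one kernel-verified Lean document; each statement's English description precedes it below -/
import Mathlib

section
/- Let u, v, ũ, ṽ be spinors in ℂ² with [u,v] = 1 and [ũ,ṽ] = 1. If tr((v uᵀ + u vᵀ)ω δgᵀ) = tr((ṽ ũᵀ + ũ ṽᵀ)ω δgᵀ) for all traceless 2×2 complex matrices δg, then there exists λ ∈ ℂ* such that ũ = λu and ṽ = λ⁻¹ v. -/
open Matrix

/-- The standard symplectic form on `ℂ²`. -/
noncomputable def symp : Matrix (Fin 2) (Fin 2) ℂ := !![0, 1; -1, 0]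

/-- The symplectic bracket `[z,w] = zᵀ ω w = z₀ w₁ − z₁ w₀`. -/
noncomputable def bracket (z w : Fin 2 → ℂ) : ℂ := z ⬝ᵥ symp.mulVec w

theorem stmt_3 (u v ut vt : Fin 2 → ℂ)
    (huv : bracket u v = 1) (hut : bracket ut vt = 1)
    (h : ∀ δg : Matrix (Fin 2) (Fin 2) ℂ, Matrix.trace δg = 0 →
      Matrix.trace ((vecMulVec v u + vecMulVec u v) * symp * δgᵀ) =
      Matrix.trace ((vecMulVec vt ut + vecMulVec ut vt) * symp * δgᵀ)) :
    ∃ lam : ℂ, lam ≠ 0 ∧ ut = lam • u ∧ vt = lam⁻¹ • v := by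
  have h1 := h !![0,1;0,0] (by simp [Matrix.trace_fin_two])
  have h2 := h !![0,0;1,0] (by simp [Matrix.trace_fin_two])
  have h3 := h !![1,0;0,-1] (by simp [Matrix.trace_fin_two])
  simp only [symp, Matrix.trace_fin_two, Matrix.mul_apply, Matrix.transpose_apply,
    Fin.sum_univ_two, Matrix.add_apply, vecMulVec_apply, Matrix.vecHead, Matrix.vecTail,
    Matrix.cons_val', Matrix.cons_val_zero, Matrix.cons_val_one, Matrix.head_cons,
    Matrix.empty_val', Matrix.cons_val_fin_one, Matrix.head_fin_const,
    Matrix.of_apply, Function.comp] at h1 h2 h3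
  simp only [bracket, symp, dotProduct, Matrix.mulVec, Fin.sum_univ_two,
    Matrix.cons_val', Matrix.cons_val_zero, Matrix.cons_val_one, Matrix.head_cons,
    Matrix.empty_val', Matrix.cons_val_fin_one, Matrix.head_fin_const,
    Matrix.of_apply] at huv hut
  set a := u 0 with ha'; set b := u 1 with hb'
  set c := v 0 with hc'; set d := v 1 with hd'
  set A := ut 0 with hA'; set B := ut 1 with hB'
  set C := vt 0 with hC'; set D := vt 1 with hD'
  have e00 : a * c = A * C := by linear_combination h1 / 2
  have e11 : b * d = B * D := by linear_combination -h2 / 2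
  have p : a * d = A * D := by linear_combination huv / 2 - hut / 2 - h3 / 4
  have q : b * c = B * C := by linear_combination -huv / 2 + hut / 2 - h3 / 4
  by_cases ha : a = 0
  · have hbc : b * c = -1 := by rw [ha] at huv; linear_combination -huv
    have hb : b ≠ 0 := fun h0 => by rw [h0] at hbc; simp at hbc
    have hc : c ≠ 0 := fun h0 => by rw [h0] at hbc; simp at hbc
    have hB : B ≠ 0 := by
      intro h0
      rw [h0, zero_mul] at q
      rcases mul_eq_zero.1 q with h' | h' <;> [exact hb h'; exact hc h']
    have hAzero : A = 0 := by
      by_contra hA0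
      have hC0 : C = 0 := by
        have := e00; rw [ha, zero_mul] at this
        exact (mul_eq_zero.1 this.symm).resolve_left hA0
      have hD0 : D = 0 := by
        have := p; rw [ha, zero_mul] at this
        exact (mul_eq_zero.1 this.symm).resolve_left hA0
      rw [hC0, hD0] at hut; simp at hut
    refine ⟨B / b, div_ne_zero hB hb, ?_, ?_⟩
    · funext i; fin_cases i
      · show A = B / b * a
        rw [ha, hAzero, mul_zero]
      · show B = B / b * b
        field_simp
    · funext i; fin_cases i
      · show C = (B / b)⁻¹ * c
        rw [inv_div]; field_simp; linear_combination -q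
      · show D = (B / b)⁻¹ * d
        rw [inv_div]; field_simp; linear_combination -e11
  · have hA : A ≠ 0 := by
      intro h0
      rw [h0, zero_mul] at e00 p
      have hc0 : c = 0 := (mul_eq_zero.1 e00).resolve_left ha
      have hd0 : d = 0 := (mul_eq_zero.1 p).resolve_left ha
      rw [hc0, hd0] at huv; simp at huv
    refine ⟨A / a, div_ne_zero hA ha, ?_, ?_⟩
    · funext i; fin_cases i
      · show A = A / a * a
        field_simp
      · show B = A / a * b
        have key : B * a = A * b := by
          by_cases hc : c = 0
          · have had : a * d = 1 := by rw [hc] at huv; linear_combination huv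
            have hd : d ≠ 0 := fun h0 => by rw [h0, mul_zero] at had; simp at had
            have hD : D ≠ 0 := fun h0 => by
              rw [h0, mul_zero] at p; exact hd ((mul_eq_zero.1 p).resolve_left ha)
            have : (B * a - A * b) * D = 0 := by linear_combination b * p - a * e11
            exact sub_eq_zero.1 ((mul_eq_zero.1 this).resolve_right hD)
          · have : (B * a - A * b) * c = 0 := by linear_combination B * e00 - A * q
            exact sub_eq_zero.1 ((mul_eq_zero.1 this).resolve_right hc)
        field_simp
        linear_combination key
    · funext i; fin_cases i
      · show C = (A / a)⁻¹ * c
        rw [inv_div]; field_simp; linear_combination -e00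
      · show D = (A / a)⁻¹ * d
        rw [inv_div]; field_simp; linear_combination -p
end

section
/- Let u, v, ũ, ṽ be spinors in ℂ² with [u,v] = 1 and [ũ,ṽ] = 1. If tr((v uᵀ + u vᵀ)ω δgᵀ) = −tr((ṽ ũᵀ + ũ ṽᵀ)ω δgᵀ) for all traceless 2×2 complex matrices δg, then there exists λ ∈ ℂ* such that ũ = λv and ṽ = −λ⁻¹ u. -/
open Matrix

theorem stmt_4 (u v ut vt : Fin 2 → ℂ)
    (huv : bracket u v = 1) (hut : bracket ut vt = 1)
    (h : ∀ δg : Matrix (Fin 2) (Fin 2) ℂ, Matrix.trace δg = 0 →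
      Matrix.trace ((vecMulVec v u + vecMulVec u v) * symp * δgᵀ) =
      -Matrix.trace ((vecMulVec vt ut + vecMulVec ut vt) * symp * δgᵀ)) :
    ∃ lam : ℂ, lam ≠ 0 ∧ ut = lam • v ∧ vt = -(lam⁻¹ • u) := by
  simp [bracket, symp, dotProduct, mulVec, Fin.sum_univ_two] at huv hut
  have t1 : (!![(0:ℂ),1;0,0])ᵀ = !![0,0;1,0] := by ext i j; fin_cases i <;> fin_cases j <;> simp
  have t2 : (!![(0:ℂ),0;1,0])ᵀ = !![0,1;0,0] := by ext i j; fin_cases i <;> fin_cases j <;> simp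
  have t3 : (!![(1:ℂ),0;0,-1])ᵀ = !![1,0;0,-1] := by ext i j; fin_cases i <;> fin_cases j <;> simp
  have h1 := h !![0,1;0,0] (by simp [Matrix.trace, Fin.sum_univ_two])
  have h2 := h !![0,0;1,0] (by simp [Matrix.trace, Fin.sum_univ_two])
  have h3 := h !![1,0;0,-1] (by simp [Matrix.trace, Fin.sum_univ_two])
  rw [t1] at h1; rw [t2] at h2; rw [t3] at h3
  simp [symp, Matrix.trace, Matrix.diag, Matrix.mul_apply, Matrix.add_apply, vecMulVec_apply,
    Fin.sum_univ_two] at h1 h2 h3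
  set a := u 0 with ha; set b := u 1 with hb
  set c := v 0 with hc; set d := v 1 with hd
  set p := ut 0 with hp; set q := ut 1 with hq
  set r := vt 0 with hr; set s := vt 1 with hs
  -- scalar equations
  have e1 : a * d - b * c = 1 := by linear_combination huv
  have e2 : p * s - q * r = 1 := by linear_combination hut
  have e3 : a * c + p * r = 0 := by linear_combination h1 / 2
  have e4 : b * d + q * s = 0 := by linear_combination - h2 / 2
  have e5 : a * d + b * c + p * s + q * r = 0 := by linear_combination - h3 / 2
  -- key identity : p d = q c
  have hxr : (p * d - q * c) * r = 0 := by
    linear_combination d * e3 - (c/2) * e5 + (c/2) * e2 - (c/2) * e1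
  have hxs : (p * d - q * c) * s = 0 := by
    linear_combination (d/2) * e2 + (d/2) * e5 - (d/2) * e1 - c * e4
  have hx : p * d - q * c = 0 := by
    by_cases hr0 : r = 0
    · rcases mul_eq_zero.mp hxs with h' | h'
      · exact h'
      · exfalso; rw [hr0, h'] at e2; simp at e2
    · rcases mul_eq_zero.mp hxr with h' | h'
      · exact h'
      · exact absurd h' hr0
  by_cases hc0 : c = 0
  · -- c = 0 : then a d = 1, p = 0, q r = -1
    have had : a * d = 1 := by linear_combination e1 + b * hc0
    have hd0 : d ≠ 0 := fun h' => by rw [h', mul_zero] at had; exact one_ne_zero had.symm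
    have hp0 : p = 0 := by
      have : p * d = 0 := by linear_combination hx + q * hc0
      rcases mul_eq_zero.mp this with h' | h'
      · exact h'
      · exact absurd h' hd0
    have hqr : q * r = -1 := by linear_combination - e2 + s * hp0
    have hq0 : q ≠ 0 := by
      intro h'; rw [h', zero_mul] at hqr; exact absurd hqr (by norm_num)
    refine ⟨q / d, div_ne_zero hq0 hd0, ?_, ?_⟩
    · funext i; fin_cases i <;> simp [← hp, ← hq, ← hc, ← hd]
      · rw [hp0, hc0, mul_zero]
      · field_simp
    · funext i; fin_cases i <;> simp [← hr, ← hs, ← ha, ← hb]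
      · field_simp
        linear_combination hqr + had
      · field_simp
        linear_combination e4
  · -- c ≠ 0 : lam = p / c
    have hpne : p ≠ 0 := by
      intro hp0
      have hq0 : q * c = 0 := by linear_combination - hx + d * hp0
      rcases mul_eq_zero.mp hq0 with h' | h'
      · rw [hp0, h'] at e2; simp at e2
      · exact absurd h' hc0
    have hqr : q * r = -(a * d) := by
      have : c * (q * r) = c * (-(a * d)) := by linear_combination d * e3 - r * hx
      exact mul_left_cancel₀ hc0 this
    have hps : p * s = -(b * c) := by linear_combination e5 - hqr
    refine ⟨p / c, div_ne_zero hpne hc0, ?_, ?_⟩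
    · funext i; fin_cases i <;> simp [← hp, ← hq, ← hc, ← hd]
      · field_simp
      · field_simp
        linear_combination - hx
    · funext i; fin_cases i <;> simp [← hr, ← hs, ← ha, ← hb]
      · field_simp
        linear_combination e3
      · field_simp
        linear_combination hps
end

section
/- Let N ∈ ℝ⁴ (Minkowski space with signature +−−−) with N·N = t ∈ {−1,1}, η_N = NᵘσᵤT-style hermitian matrix with det η_N = t, and let n ∈ ℂ² with ⟨n,n⟩_N := n†η_Nᵀn = s ∈ {−1,1}. Define u = s ω η_N n̄ and v = n. Then [u,v] = 1, and for every spinor r ∈ ℂ²: ⟨n,r⟩_N = s[u,r] and [n,r] = −s t ⟨u,r⟩_N. -/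
open Matrix

/-- The hermitian matrix `η_N = Nᵘσᵤ` associated to a vector of Minkowski space. -/
noncomputable def etaN (N : Fin 4 → ℝ) : Matrix (Fin 2) (Fin 2) ℂ :=
  !![(N 0 : ℂ) + (N 3 : ℂ), (N 1 : ℂ) - Complex.I * (N 2 : ℂ);
     (N 1 : ℂ) + Complex.I * (N 2 : ℂ), (N 0 : ℂ) - (N 3 : ℂ)]

/-- The hermitian pairing `⟨z₁,z₂⟩_N = z₁† η_Nᵀ z₂`. -/
noncomputable def herm (N : Fin 4 → ℝ) (z₁ z₂ : Fin 2 → ℂ) : ℂ :=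
  star z₁ ⬝ᵥ (etaN N)ᵀ.mulVec z₂

/-- The Minkowski scalar product in signature `(+,−,−,−)`. -/
noncomputable def mink (N M : Fin 4 → ℝ) : ℝ :=
  N 0 * M 0 - N 1 * M 1 - N 2 * M 2 - N 3 * M 3

theorem stmt_5 (N : Fin 4 → ℝ) (t s : ℝ)
    (ht : t = 1 ∨ t = -1) (hs : s = 1 ∨ s = -1)
    (hN : mink N N = t)
    (n : Fin 2 → ℂ) (hn : herm N n n = (s : ℂ)) :
    bracket ((s : ℂ) • (symp * etaN N).mulVec (star n)) n = 1 ∧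
    (∀ r : Fin 2 → ℂ,
      herm N n r = (s : ℂ) * bracket ((s : ℂ) • (symp * etaN N).mulVec (star n)) r) ∧
    (∀ r : Fin 2 → ℂ,
      bracket n r = -((s : ℂ) * (t : ℂ)) * herm N ((s : ℂ) • (symp * etaN N).mulVec (star n)) r) := by

  have hN' : ((N 0:ℂ)) * (N 0) - (N 1) * (N 1) - (N 2) * (N 2) - (N 3) * (N 3) = (t:ℂ) := by
    exact_mod_cast congrArg (Complex.ofReal) hN
  simp only [herm, bracket, etaN, symp, Matrix.mulVec, Matrix.mul_apply, dotProduct,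
    Fin.sum_univ_two, Matrix.cons_val', Matrix.cons_val_zero, Matrix.cons_val_one,
    Matrix.head_cons, Matrix.transpose_apply, Matrix.of_apply, Pi.star_apply, Pi.smul_apply,
    smul_eq_mul, Matrix.empty_val', Matrix.cons_val_fin_one, Matrix.head_fin_const,
    Complex.star_def, map_add, _root_.map_mul, map_sub, map_neg, map_zero, _root_.map_one,
    Complex.conj_ofReal, Complex.conj_I, Complex.conj_conj,
    zero_mul, mul_zero, add_zero, zero_add, neg_mul, one_mul, mul_one, neg_neg] at hn ⊢
  rcases hs with rfl | rfl <;> rcases ht with rfl | rfl <;>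
    push_cast at hn hN' ⊢ <;>
    refine ⟨by first | linear_combination hn | linear_combination -hn, fun r => by ring,
      fun r => ?_⟩ <;>
    · set X := (n 0 * r 1 - n 1 * r 0) with hX
      first
      | linear_combination X * hN' + (X * (N 2:ℂ)^2) * Complex.I_sq
      | linear_combination (-X) * hN' + (-(X * (N 2:ℂ)^2)) * Complex.I_sq
end

section
/- With the hypotheses of the previous setting (N normalized to t = ±1, n with ⟨n,n⟩_N = s = ±1, u = s ω η_N n̄, v = n), the resolution of identity holds: η_Nᵀ = η_Nᵀ (s n n† + s t u u†) η_Nᵀ. -/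
open Matrix

private lemma resolution_aux (N : Fin 4 → ℝ) (t s : ℝ)
    (ht : t = 1 ∨ t = -1) (hs : s = 1 ∨ s = -1)
    (hN : mink N N = t)
    (n : Fin 2 → ℂ) (hn : herm N n n = (s : ℂ)) :
    ((s : ℂ) • vecMulVec n (star n) +
          ((s : ℂ) * (t : ℂ)) •
            vecMulVec ((s : ℂ) • (symp * etaN N).mulVec (star n))
              (star ((s : ℂ) • (symp * etaN N).mulVec (star n)))) *
        (etaN N)ᵀ = 1 := by
  have hN' : ((N 0:ℂ))*(N 0) - (N 1)*(N 1) - (N 2)*(N 2) - (N 3)*(N 3) = (t:ℂ) := by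
    exact_mod_cast congrArg (Complex.ofReal) hN
  have hI : Complex.I * Complex.I = -1 := Complex.I_mul_I
  have hs2 : (s:ℂ) * (s:ℂ) = 1 := by rcases hs with h | h <;> simp [h]
  have ht2 : (t:ℂ) * (t:ℂ) = 1 := by rcases ht with h | h <;> simp [h]
  simp only [herm, etaN, dotProduct, mulVec, Fin.sum_univ_two, transpose_apply, cons_val',
    cons_val_zero, cons_val_one, head_cons, head_fin_const, Pi.star_apply, of_apply,
    empty_val', cons_val_fin_one, Complex.star_def] at hn
  ext i j
  fin_cases i <;> fin_cases j <;>
    simp [symp, etaN, vecMulVec, mulVec, dotProduct, Matrix.mul_apply, Fin.sum_univ_two,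
      Matrix.one_apply, vecHead, vecTail, Complex.star_def]
  · linear_combination (s:ℂ)*hn + (1 + (s:ℂ)*t*(((N 0:ℂ)+(N 3))*((N 0:ℂ)-(N 3)) - ((N 1:ℂ)-Complex.I*(N 2))*((N 1:ℂ)+Complex.I*(N 2)))*(n 1)*(((N 1:ℂ)+Complex.I*(N 2))*((starRingEnd ℂ) (n 0)) + ((N 0:ℂ)-(N 3))*((starRingEnd ℂ) (n 1))))*hs2 +
      (s:ℂ)*(n 1)*(((N 1:ℂ)+Complex.I*(N 2))*((starRingEnd ℂ) (n 0)) + ((N 0:ℂ)-(N 3))*((starRingEnd ℂ) (n 1)))*((t:ℂ)*((N 2:ℂ))^2*hI + (t:ℂ)*hN' + ht2)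
  · linear_combination -(s:ℂ)*(n 0)*(((N 1:ℂ)+Complex.I*(N 2))*((starRingEnd ℂ) (n 0)) + ((N 0:ℂ)-(N 3))*((starRingEnd ℂ) (n 1)))*((t:ℂ)*((N 2:ℂ))^2*hI + (t:ℂ)*hN' + ht2 + (t:ℂ)*(((N 0:ℂ)+(N 3))*((N 0:ℂ)-(N 3)) - ((N 1:ℂ)-Complex.I*(N 2))*((N 1:ℂ)+Complex.I*(N 2)))*hs2)
  · linear_combination -(s:ℂ)*(n 1)*(((N 0:ℂ)+(N 3))*((starRingEnd ℂ) (n 0)) + ((N 1:ℂ)-Complex.I*(N 2))*((starRingEnd ℂ) (n 1)))*((t:ℂ)*((N 2:ℂ))^2*hI + (t:ℂ)*hN' + ht2 + (t:ℂ)*(((N 0:ℂ)+(N 3))*((N 0:ℂ)-(N 3)) - ((N 1:ℂ)-Complex.I*(N 2))*((N 1:ℂ)+Complex.I*(N 2)))*hs2)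
  · linear_combination (s:ℂ)*hn + (1 + (s:ℂ)*t*(((N 0:ℂ)+(N 3))*((N 0:ℂ)-(N 3)) - ((N 1:ℂ)-Complex.I*(N 2))*((N 1:ℂ)+Complex.I*(N 2)))*(n 0)*(((N 0:ℂ)+(N 3))*((starRingEnd ℂ) (n 0)) + ((N 1:ℂ)-Complex.I*(N 2))*((starRingEnd ℂ) (n 1))))*hs2 +
      (s:ℂ)*(n 0)*(((N 0:ℂ)+(N 3))*((starRingEnd ℂ) (n 0)) + ((N 1:ℂ)-Complex.I*(N 2))*((starRingEnd ℂ) (n 1)))*((t:ℂ)*((N 2:ℂ))^2*hI + (t:ℂ)*hN' + ht2)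

theorem stmt_6 (N : Fin 4 → ℝ) (t s : ℝ)
    (ht : t = 1 ∨ t = -1) (hs : s = 1 ∨ s = -1)
    (hN : mink N N = t)
    (n : Fin 2 → ℂ) (hn : herm N n n = (s : ℂ)) :
    (etaN N)ᵀ =
      (etaN N)ᵀ *
        ((s : ℂ) • vecMulVec n (star n) +
          ((s : ℂ) * (t : ℂ)) •
            vecMulVec ((s : ℂ) • (symp * etaN N).mulVec (star n))
              (star ((s : ℂ) • (symp * etaN N).mulVec (star n)))) *
        (etaN N)ᵀ := by
  rw [Matrix.mul_assoc, resolution_aux N t s ht hs hN n hn, Matrix.mul_one]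
end

section
/- Let N ∈ ℝ⁴ with η_N = Nᵘσᵤ, det η_N = t ∈ {−1,1}, and n ∈ ℂ² with s = ⟨n,n⟩_N ∈ {−1,1}. Then for any w ∈ ℂ² with s⟨w,w⟩_N > 0, one has t·s⟨w,w⟩_N ≥ t|⟨w,n⟩_N|², and if t = −1 or equality holds in a suitable sense then (s⟨w,w⟩_N)^{t·2j} ≥ |⟨w,n⟩_N|^{t·4j} for j > 0, with equality if and only if w = ξn for some ξ ∈ ℂ. -/
/-!
Expanding in coordinates gives the identity
`⟨n,n⟩_N ⟨w,w⟩_N − |⟨w,n⟩_N|² = (N·N) |[n,w]|²`, so with `⟨n,n⟩_N = s` and `N·N = t` the gap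
`s⟨w,w⟩_N − |⟨w,n⟩_N|²` has the sign of `t` and vanishes exactly when the symplectic bracket
`[n,w]` does, i.e. when `w` is a multiple of `n`. Raising to the power `t·2j` turns the sign
condition into the stated inequality, since `y ↦ y ^ c` is increasing for `c > 0`, decreasing
for `c < 0`, and injective on `[0, ∞)` for `c ≠ 0`.
-/

open Matrix

lemma exists_eq_smul_iff_mul_sub_mul_eq_zero {K : Type*} [Field K] {n : Fin 2 → K}
    (hn : n ≠ 0) (w : Fin 2 → K) : (∃ ξ : K, w = ξ • n) ↔ n 0 * w 1 - n 1 * w 0 = 0 := by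
  constructor
  · rintro ⟨ξ, rfl⟩
    simp only [Pi.smul_apply, smul_eq_mul]
    ring
  · intro hd
    by_cases h0 : n 0 = 0
    · have h1 : n 1 ≠ 0 := fun h1 => hn (funext fun i => by fin_cases i <;> assumption)
      have hw0 : w 0 = 0 := by simpa [h0, h1] using hd
      refine ⟨w 1 / n 1, funext fun i => ?_⟩
      fin_cases i
      · simp [hw0, h0]
      · simp [h1]
    · refine ⟨w 0 / n 0, funext fun i => ?_⟩
      fin_cases i
      · simp [h0]
      · simp only [Fin.mk_one, Pi.smul_apply, smul_eq_mul]
        field_simp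
        linear_combination hd

lemma bracket_apply (z w : Fin 2 → ℂ) : bracket z w = z 0 * w 1 - z 1 * w 0 := by
  simp [bracket, symp, dotProduct, mulVec, Fin.sum_univ_two]
  ring

lemma herm_swap (N : Fin 4 → ℝ) (z₁ z₂ : Fin 2 → ℂ) :
    herm N z₂ z₁ = star (herm N z₁ z₂) := by
  simp only [herm, etaN, dotProduct, mulVec, Fin.sum_univ_two, Pi.star_apply,
    Complex.star_def, map_add, map_sub, map_mul, Complex.conj_conj, Complex.conj_ofReal,
    Complex.conj_I, of_apply, transpose_apply, cons_val', cons_val_zero, cons_val_one,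
    empty_val', cons_val_fin_one]
  ring

lemma herm_self_im (N : Fin 4 → ℝ) (z : Fin 2 → ℂ) : (herm N z z).im = 0 :=
  Complex.conj_eq_iff_im.mp (herm_swap N z z).symm

/- The 2×2 identity `(z†Hz)(w†Hw) − (z†Hw)(w†Hz) = det H · |det(z w)|²` for hermitian `H`,
with `det η_N = N·N`. -/
lemma herm_mul_herm_sub_herm_mul_herm (N : Fin 4 → ℝ) (n w : Fin 2 → ℂ) :
    herm N n n * herm N w w - herm N n w * herm N w n =
      mink N N * (bracket n w * star (bracket n w)) := by
  simp only [bracket_apply, herm, etaN, mink, dotProduct, mulVec, Fin.sum_univ_two,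
    Pi.star_apply, Complex.star_def, map_sub, map_mul, of_apply, transpose_apply, cons_val',
    cons_val_zero, cons_val_one, empty_val', cons_val_fin_one]
  push_cast
  linear_combination (N 2 : ℂ) ^ 2 * (n 0 * w 1 - n 1 * w 0) *
    (starRingEnd ℂ (n 0) * starRingEnd ℂ (w 1) - starRingEnd ℂ (n 1) * starRingEnd ℂ (w 0)) *
    Complex.I_sq

lemma herm_re_mul_herm_re_sub_sq_norm (N : Fin 4 → ℝ) (n w : Fin 2 → ℂ) :
    (herm N n n).re * (herm N w w).re - ‖herm N w n‖ ^ 2 = mink N N * ‖bracket n w‖ ^ 2 := by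
  have h := congrArg Complex.re (herm_mul_herm_sub_herm_mul_herm N n w)
  rw [herm_swap N w n, Complex.star_def, Complex.conj_mul', Complex.mul_conj'] at h
  simpa [Complex.mul_re, herm_self_im, ← Complex.ofReal_pow] using h

lemma Real.rpow_le_rpow_of_mul_sub_nonneg {x y c : ℝ} (hx : 0 < x) (hy : 0 ≤ y)
    (h : 0 ≤ c * (x - y)) : y ^ c ≤ x ^ c := by
  rcases lt_trichotomy c 0 with hc | rfl | hc
  · exact Real.rpow_le_rpow_of_nonpos hx (by nlinarith) hc.le
  · simp
  · exact Real.rpow_le_rpow hy (by nlinarith) hc.le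

theorem stmt_7_general (N : Fin 4 → ℝ) (t s : ℝ)
    (ht : t = 1 ∨ t = -1)
    (hN : mink N N = t)
    (n : Fin 2 → ℂ) (hn : herm N n n = (s : ℂ))
    (w : Fin 2 → ℂ) (hw : 0 < s * (herm N w w).re)
    (j : ℝ) (hj : 0 < j) :
    t * (s * (herm N w w).re) ≥ t * ‖herm N w n‖ ^ 2 ∧
    Real.rpow (s * (herm N w w).re) (t * (2 * j)) ≥
      Real.rpow (‖herm N w n‖) (t * (4 * j)) ∧
    (Real.rpow (s * (herm N w w).re) (t * (2 * j)) =
        Real.rpow (‖herm N w n‖) (t * (4 * j)) ↔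
      ∃ ξ : ℂ, w = ξ • n) := by
  have hgap : s * (herm N w w).re - ‖herm N w n‖ ^ 2 = t * ‖bracket n w‖ ^ 2 := by
    simpa [hn, hN] using herm_re_mul_herm_re_sub_sq_norm N n w
  have hn0 : n ≠ 0 := by
    rintro rfl
    obtain rfl : s = 0 := by simpa [herm, eq_comm] using hn
    simp at hw
  have ht0 : t ≠ 0 := by rcases ht with rfl | rfl <;> norm_num
  have hc : t * (2 * j) ≠ 0 := mul_ne_zero ht0 (by positivity)
  have hpow : ‖herm N w n‖ ^ (t * (4 * j)) = (‖herm N w n‖ ^ 2) ^ (t * (2 * j)) := by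
    rw [← Real.rpow_natCast, ← Real.rpow_mul (norm_nonneg _)]
    ring_nf
  have hsign : 0 ≤ t * (s * (herm N w w).re - ‖herm N w n‖ ^ 2) := by
    rw [hgap, ← mul_assoc]
    exact mul_nonneg (mul_self_nonneg t) (sq_nonneg _)
  simp only [Real.rpow_eq_pow, hpow, ge_iff_le]
  refine ⟨by linarith [mul_sub t (s * (herm N w w).re) (‖herm N w n‖ ^ 2)],
    Real.rpow_le_rpow_of_mul_sub_nonneg hw (sq_nonneg _) ?_, ?_⟩
  · rw [mul_comm t, mul_assoc]
    exact mul_nonneg (by positivity) hsign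
  · rw [(Real.rpow_left_injOn hc).eq_iff hw.le (sq_nonneg _ : (0 : ℝ) ≤ _), ← sub_eq_zero, hgap,
      exists_eq_smul_iff_mul_sub_mul_eq_zero hn0, ← bracket_apply]
    simp [ht0]

theorem stmt_7 (N : Fin 4 → ℝ) (t s : ℝ)
    (ht : t = 1 ∨ t = -1) (hs : s = 1 ∨ s = -1)
    (hN : mink N N = t)
    (n : Fin 2 → ℂ) (hn : herm N n n = (s : ℂ))
    (w : Fin 2 → ℂ) (hw : 0 < s * (herm N w w).re)
    (hwn : 0 < ‖herm N w n‖)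
    (j : ℝ) (hj : 0 < j) :
    t * (s * (herm N w w).re) ≥ t * ‖herm N w n‖ ^ 2 ∧
    Real.rpow (s * (herm N w w).re) (t * (2 * j)) ≥
      Real.rpow (‖herm N w n‖) (t * (4 * j)) ∧
    (Real.rpow (s * (herm N w w).re) (t * (2 * j)) =
        Real.rpow (‖herm N w n‖) (t * (4 * j)) ↔
      ∃ ξ : ℂ, w = ξ • n) :=
  stmt_7_general N t s ht hN n hn w hw j hj
end

section
/- Let M be a real symmetric k×k matrix of signature (p,q,n) with p+q+n=k, and let R, R' be (p+q)×k real matrices of full rank p+q with RᵀηR = R'ᵀηR' = M, where η = diag(1^p, (−1)^q). Then there exists G ∈ O(p,q) such that R' = GR. -/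
open Matrix

/-- Auxiliary: a matrix whose `mulVecLin` has full-rank rows is surjective. -/
private lemma aux_surj {m k : ℕ} (A : Matrix (Fin m) (Fin k) ℝ) (hA : A.rank = m) :
    Function.Surjective A.mulVecLin := by
  rw [← LinearMap.range_eq_top]
  apply Submodule.eq_top_of_finrank_eq
  rw [Matrix.rank] at hA
  simpa using hA

private lemma aux_inj {m k : ℕ} (A : Matrix (Fin m) (Fin k) ℝ) (hA : A.rank = m) :
    Function.Injective Aᵀ.mulVecLin := by
  rw [← LinearMap.ker_eq_bot]
  have h1 := LinearMap.finrank_range_add_finrank_ker (Aᵀ.mulVecLin)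
  have h2 : Aᵀ.rank = m := by rw [Matrix.rank_transpose, hA]
  rw [Matrix.rank] at h2
  rw [h2] at h1
  simp only [Module.finrank_pi, Fintype.card_fin] at h1
  have : Module.finrank ℝ (LinearMap.ker Aᵀ.mulVecLin) = 0 := by omega
  rw [Submodule.finrank_eq_zero] at this
  exact this

theorem stmt_12 (p q n k : ℕ) (hk : p + q + n = k)
    (M : Matrix (Fin k) (Fin k) ℝ) (hMsymm : Mᵀ = M)
    -- `M` has signature `(p, q, n)`:
    (hsig : ∃ P : Matrix (Fin k) (Fin k) ℝ, IsUnit P.det ∧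
      Pᵀ * M * P = Matrix.diagonal fun i : Fin k =>
        if (i : ℕ) < p then (1 : ℝ) else if (i : ℕ) < p + q then -1 else 0)
    (η : Matrix (Fin (p + q)) (Fin (p + q)) ℝ)
    (hη : η = Matrix.diagonal fun i : Fin (p + q) => if (i : ℕ) < p then (1 : ℝ) else -1)
    (R R' : Matrix (Fin (p + q)) (Fin k) ℝ)
    (hR : R.rank = p + q) (hR' : R'.rank = p + q)
    (hRM : Rᵀ * η * R = M) (hR'M : R'ᵀ * η * R' = M) :
    ∃ G : Matrix (Fin (p + q)) (Fin (p + q)) ℝ, Gᵀ * η * G = η ∧ R' = G * R := by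
  classical
  have hRsurj := aux_surj R hR
  have hR'surj := aux_surj R' hR'
  have hRTinj := aux_inj R hR
  have hR'Tinj := aux_inj R' hR'
  -- η is surjective (η * η = 1)
  have hηη : η * η = 1 := by
    subst hη
    rw [Matrix.diagonal_mul_diagonal]
    ext i j
    by_cases h : i = j
    · subst h
      simp only [Matrix.diagonal_apply_eq, Matrix.one_apply_eq]
      split <;> norm_num
    · simp [Matrix.diagonal_apply_ne _ h, Matrix.one_apply_ne h]
  have hηsurj : Function.Surjective η.mulVecLin := fun w =>
    ⟨η.mulVecLin w, by
      simp only [Matrix.mulVecLin_apply, Matrix.mulVec_mulVec, hηη, Matrix.one_mulVec]⟩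
  -- range of M.mulVecLin equals range of Rᵀ.mulVecLin, and of R'ᵀ.mulVecLin
  have key : ∀ (S : Matrix (Fin (p + q)) (Fin k) ℝ), Sᵀ * η * S = M →
      Function.Surjective S.mulVecLin →
      LinearMap.range M.mulVecLin = LinearMap.range Sᵀ.mulVecLin := by
    intro S hSM hSsurj
    have : M = Sᵀ * (η * S) := by rw [← hSM, Matrix.mul_assoc]
    rw [this, Matrix.mulVecLin_mul, LinearMap.range_comp]
    have hsurj2 : Function.Surjective (η * S).mulVecLin := by
      rw [Matrix.mulVecLin_mul]
      exact hηsurj.comp hSsurj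
    rw [LinearMap.range_eq_top.mpr hsurj2, Submodule.map_top]
  have hrange : LinearMap.range R'ᵀ.mulVecLin = LinearMap.range Rᵀ.mulVecLin := by
    rw [← key R hRM hRsurj, ← key R' hR'M hR'surj]
  -- each row of R' is in the row space of R
  have hrow : ∀ i : Fin (p + q), ∃ v : Fin (p + q) → ℝ, Rᵀ *ᵥ v = R'ᵀ *ᵥ Pi.single i 1 := by
    intro i
    have : R'ᵀ *ᵥ Pi.single i 1 ∈ LinearMap.range Rᵀ.mulVecLin := by
      rw [← hrange]
      exact ⟨Pi.single i 1, rfl⟩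
    obtain ⟨v, hv⟩ := this
    exact ⟨v, hv⟩
  choose v hv using hrow
  refine ⟨Matrix.of (fun i j => v i j), ?_, ?_⟩
  · -- GᵀηG = η
    set G : Matrix (Fin (p + q)) (Fin (p + q)) ℝ := Matrix.of (fun i j => v i j) with hG
    have hGR : G * R = R' := by
      ext i j
      have := congrFun (hv i) j
      simp only [Matrix.mulVec, dotProduct, Matrix.transpose_apply,
        Pi.single_apply, mul_ite, mul_one, mul_zero, Finset.sum_ite_eq',
        Finset.mem_univ, if_true] at this
      simp only [Matrix.mul_apply, hG, Matrix.of_apply]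
      rw [← this]
      exact Finset.sum_congr rfl fun l _ => mul_comm _ _
    -- Rᵀ * (GᵀηG * R) = Rᵀ * (η * R)
    have heq : Rᵀ * ((Gᵀ * η * G) * R) = Rᵀ * (η * R) := by
      have h1 : (G * R)ᵀ * η * (G * R) = Rᵀ * η * R := by rw [hGR, hR'M, hRM]
      calc Rᵀ * ((Gᵀ * η * G) * R) = (G * R)ᵀ * η * (G * R) := by
            rw [Matrix.transpose_mul]; rw [Matrix.mul_assoc, Matrix.mul_assoc,
              Matrix.mul_assoc, Matrix.mul_assoc]
        _ = Rᵀ * η * R := h1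
        _ = Rᵀ * (η * R) := by rw [Matrix.mul_assoc]
    -- cancel Rᵀ on the left
    have heq2 : (Gᵀ * η * G) * R = η * R := by
      ext i j
      have h : Rᵀ.mulVecLin ((Gᵀ * η * G * R) *ᵥ Pi.single j 1) =
          Rᵀ.mulVecLin ((η * R) *ᵥ Pi.single j 1) := by
        simp only [Matrix.mulVecLin_apply, Matrix.mulVec_mulVec, heq]
      have := congrFun (hRTinj h) i
      simpa using this
    -- cancel R on the right using surjectivity
    have heq3 : ∀ w : Fin (p + q) → ℝ, (Gᵀ * η * G) *ᵥ w = η *ᵥ w := by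
      intro w
      obtain ⟨u, hu⟩ := hRsurj w
      rw [← hu]
      calc (Gᵀ * η * G) *ᵥ (R.mulVecLin u) = ((Gᵀ * η * G) * R) *ᵥ u := by
            simp [Matrix.mulVec_mulVec]
        _ = (η * R) *ᵥ u := by rw [heq2]
        _ = η *ᵥ (R.mulVecLin u) := by simp [Matrix.mulVec_mulVec]
    ext i j
    have := congrFun (heq3 (Pi.single j 1)) i
    simpa using this
  · -- R' = G * R
    ext i j
    have := congrFun (hv i) j
    simp only [Matrix.mulVec, dotProduct, Matrix.transpose_apply,
      Pi.single_apply, mul_ite, mul_one, mul_zero, Finset.sum_ite_eq',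
      Finset.mem_univ, if_true] at this
    simp only [Matrix.mul_apply, Matrix.of_apply]
    rw [← this]
    exact Finset.sum_congr rfl fun l _ => mul_comm _ _
end

section
/- Let Γ be a finite multigraph in which every vertex has even degree, let each edge e carry a half-integer j_e (i.e. 2j_e ∈ ℤ), and let each vertex carry a label τ(v) ∈ {0,1}. Then Σ over edges e = (u,v) with τ(u) ≠ τ(v) of s_e · 2j_e · (π/2) is an integer multiple of π, for arbitrary signs s_e ∈ {−1,1}, provided that at each vertex the sum of the incident j_e is an integer. -/
open Finset

theorem stmt_13 {V E : Type} [Fintype V] [Fintype E] [DecidableEq V]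
    -- a finite multigraph, given by the two endpoints of each edge
    (fst snd : E → V)
    -- every vertex has even degree
    (heven : ∀ v : V, Even ((univ.filter fun e => fst e = v).card +
      (univ.filter fun e => snd e = v).card))
    -- each edge carries a half-integer spin
    (j : E → ℝ) (hj : ∀ e, ∃ m : ℤ, 2 * j e = (m : ℝ))
    -- at each vertex the sum of the incident spins is an integer
    (hint : ∀ v : V, ∃ m : ℤ,
      (∑ e ∈ univ.filter fun e => fst e = v, j e) +
      (∑ e ∈ univ.filter fun e => snd e = v, j e) = (m : ℝ))
    -- vertex labels and arbitrary signs
    (τ : V → Fin 2) (s : E → ℝ) (hs : ∀ e, s e = 1 ∨ s e = -1) :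
    ∃ m : ℤ,
      (∑ e ∈ univ.filter fun e => τ (fst e) ≠ τ (snd e),
        s e * (2 * j e) * (Real.pi / 2)) = (m : ℝ) * Real.pi := by
  classical
  choose m hm using hj
  set A := univ.filter fun e : E => τ (fst e) ≠ τ (snd e) with hA
  set T : ℤ := ∑ e ∈ A, (if s e = 1 then 1 else -1) * m e with hT
  have hTcast : (∑ e ∈ A, s e * (2 * j e)) = (T : ℝ) := by
    rw [hT]
    push_cast
    refine Finset.sum_congr rfl fun e _ => ?_
    rw [hm e]
    rcases hs e with h | h <;> rw [h] <;> norm_num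
  -- per-vertex parity
  have hv : ∀ v : V,
      ((∑ e ∈ univ.filter fun e => fst e = v, m e)
        + (∑ e ∈ univ.filter fun e => snd e = v, m e) : ZMod 2) = 0 := by
    intro v
    obtain ⟨n, hn⟩ := hint v
    have hZ : (∑ e ∈ univ.filter fun e => fst e = v, m e)
        + (∑ e ∈ univ.filter fun e => snd e = v, m e) = 2 * n := by
      have : ((∑ e ∈ univ.filter fun e => fst e = v, m e)
          + (∑ e ∈ univ.filter fun e => snd e = v, m e) : ℝ) = ((2 * n : ℤ) : ℝ) := by
        push_cast
        simp_rw [← hm]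
        rw [← Finset.mul_sum, ← Finset.mul_sum]
        linarith [hn]
      exact_mod_cast this
    rw [← Int.cast_add, hZ, Int.cast_mul]
    have h2 : ((2 : ℤ) : ZMod 2) = 0 := by decide
    rw [h2, zero_mul]
  -- sum over vertices with τ = 1
  have swap1 : ∀ f : E → V,
      (∑ v ∈ univ.filter fun v => τ v = 1,
        ∑ e ∈ univ.filter fun e => f e = v, ((m e : ZMod 2)))
      = ∑ e : E, if τ (f e) = 1 then (m e : ZMod 2) else 0 := by
    intro f
    have hinner : ∀ v : V, (∑ e ∈ univ.filter fun e => f e = v, ((m e : ZMod 2)))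
        = ∑ e : E, if f e = v then (m e : ZMod 2) else 0 := fun v => Finset.sum_filter _ _
    simp_rw [hinner]
    rw [Finset.sum_comm]
    refine Finset.sum_congr rfl fun e _ => ?_
    rw [Finset.sum_ite_eq (univ.filter fun v => τ v = 1) (f e) (fun _ => (m e : ZMod 2))]
    simp
  have key0 : (∑ e ∈ A, (m e : ZMod 2)) = 0 := by
    have h1 : (∑ v ∈ univ.filter fun v => τ v = 1,
        (((∑ e ∈ univ.filter fun e => fst e = v, m e)
          + (∑ e ∈ univ.filter fun e => snd e = v, m e)) : ZMod 2)) = 0 := by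
      simp only [hv, Finset.sum_const_zero]
    have h2 : (∑ e : E, ((if τ (fst e) = 1 then (m e : ZMod 2) else 0)
        + (if τ (snd e) = 1 then (m e : ZMod 2) else 0))) = 0 := by
      rw [Finset.sum_add_distrib, ← swap1 fst, ← swap1 snd, ← Finset.sum_add_distrib]
      simpa [Int.cast_sum] using h1
    have h3 : (∑ e ∈ A, (m e : ZMod 2))
        = ∑ e : E, ((if τ (fst e) = 1 then (m e : ZMod 2) else 0)
          + (if τ (snd e) = 1 then (m e : ZMod 2) else 0)) := by
      rw [hA, Finset.sum_filter]
      refine Finset.sum_congr rfl fun e _ => ?_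
      have hfin : ∀ x : Fin 2, x = 0 ∨ x = 1 := by decide
      rcases hfin (τ (fst e)) with h | h <;> rcases hfin (τ (snd e)) with h' | h' <;>
        simp [h, h', CharTwo.add_self_eq_zero]
    rw [h3, h2]
  have hTpar : (T : ZMod 2) = 0 := by
    rw [hT]
    push_cast
    rw [← key0]
    refine Finset.sum_congr rfl fun e _ => ?_
    split <;> simp [CharTwo.neg_eq]
  obtain ⟨k, hk⟩ := (ZMod.intCast_zmod_eq_zero_iff_dvd T 2).mp hTpar
  refine ⟨k, ?_⟩
  calc (∑ e ∈ A, s e * (2 * j e) * (Real.pi / 2))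
      = (∑ e ∈ A, s e * (2 * j e)) * (Real.pi / 2) := by rw [Finset.sum_mul]
    _ = (T : ℝ) * (Real.pi / 2) := by rw [hTcast]
    _ = (k : ℝ) * Real.pi := by rw [hk]; push_cast; ring
end

section
/- Let M be a traceless 2×2 complex matrix such that Mᵀ belongs to the Lie algebra of the stabilizer of a normal N (i.e., M = −(η_N⁻¹)ᵀ M† η_Nᵀ, where η_N is the hermitian matrix of the unit vector N with det η_N = ±1). Then the eigenvalues of M are either both real or both purely imaginary. -/
open Matrix

/-! The defining relation `M = -(η⁻¹)ᵀ Mᴴ ηᵀ` says that `-M` is similar to `Mᴴ`, so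
`det M = conj (det M)` is real. A traceless `2 × 2` matrix has characteristic polynomial
`X² + det M`, so every eigenvalue squares to the same real number `-det M`: according to its
sign, all eigenvalues are real or all are purely imaginary. -/

lemma det_etaN (N : Fin 4 → ℝ) : (etaN N).det = (mink N N : ℂ) := by
  simp only [etaN, mink, det_fin_two_of]
  push_cast
  linear_combination (N 2 : ℂ) ^ 2 * Complex.I_sq

lemma isUnit_det_etaN {N : Fin 4 → ℝ} (hN : mink N N = 1 ∨ mink N N = -1) :
    IsUnit (etaN N).det := by
  rw [det_etaN]
  rcases hN with h | h <;> simp [h]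

lemma Matrix.det_eq_star_of_eq_neg_conj {n R : Type*} [Fintype n] [DecidableEq n] [CommRing R]
    [StarRing R] {A M : Matrix n n R} (hA : IsUnit A.det) (hM : M = -((A⁻¹)ᵀ * Mᴴ * Aᵀ)) :
    M.det = (-1) ^ Fintype.card n * star M.det := by
  have hAt : IsUnit Aᵀ := (isUnit_iff_isUnit_det _).mpr (by rwa [det_transpose])
  conv_lhs => rw [hM]
  rw [det_neg, transpose_nonsing_inv, det_conj' hAt, det_conjTranspose]

lemma Matrix.sq_eq_neg_det_of_mem_spectrum {K : Type*} [Field K] {M : Matrix (Fin 2) (Fin 2) K}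
    (htr : M.trace = 0) {μ : K} (hμ : μ ∈ spectrum K M) : μ ^ 2 = -M.det := by
  rw [mem_spectrum_iff_isRoot_charpoly, charpoly_fin_two, htr] at hμ
  simpa [eq_neg_iff_add_eq_zero] using hμ

lemma Complex.im_eq_zero_of_sq_eq_ofReal {z : ℂ} {r : ℝ} (hr : 0 ≤ r) (h : z ^ 2 = r) :
    z.im = 0 := by
  have hre := congrArg Complex.re h
  have him := congrArg Complex.im h
  simp only [sq, mul_re, mul_im, ofReal_re, ofReal_im] at hre him
  rcases mul_eq_zero.mp (by linarith : z.re * z.im = 0) with h0 | h0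
  · nlinarith [mul_self_nonneg z.im]
  · exact h0

lemma Complex.re_eq_zero_of_sq_eq_ofReal {z : ℂ} {r : ℝ} (hr : r ≤ 0) (h : z ^ 2 = r) :
    z.re = 0 := by
  have hIz : (I * z) ^ 2 = ((-r : ℝ) : ℂ) := by
    rw [mul_pow, I_sq, h, ofReal_neg, neg_one_mul]
  simpa using im_eq_zero_of_sq_eq_ofReal (neg_nonneg.mpr hr) hIz

theorem stmt_19 (N : Fin 4 → ℝ) (hN : mink N N = 1 ∨ mink N N = -1)
    (M : Matrix (Fin 2) (Fin 2) ℂ) (htr : Matrix.trace M = 0)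
    (hM : M = -(((etaN N)⁻¹)ᵀ * Mᴴ * (etaN N)ᵀ)) :
    (∀ μ ∈ spectrum ℂ M, μ.im = 0) ∨ (∀ μ ∈ spectrum ℂ M, μ.re = 0) := by
  have hdet : (M.det.re : ℂ) = M.det := by
    have h := det_eq_star_of_eq_neg_conj (isUnit_det_etaN hN) hM
    rw [Fintype.card_fin, neg_one_sq, one_mul] at h
    exact Complex.conj_eq_iff_re.mp h.symm
  have hsq : ∀ μ ∈ spectrum ℂ M, μ ^ 2 = ((-M.det.re : ℝ) : ℂ) := fun μ hμ => by
    rw [sq_eq_neg_det_of_mem_spectrum htr hμ, Complex.ofReal_neg, hdet]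
  rcases le_total 0 (-M.det.re) with h | h
  · exact Or.inl fun μ hμ => Complex.im_eq_zero_of_sq_eq_ofReal h (hsq μ hμ)
  · exact Or.inr fun μ hμ => Complex.re_eq_zero_of_sq_eq_ofReal h (hsq μ hμ)
end
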